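/- arXiv:2006.07336 — 8 statements merged into one kernel-verified Lean document; each statement's English description precedes it below -/
import Mathlib

section
/- Let N ≥ 2 and u ≥ 2 be integers, let c ∈ [0, N], and set ε = 0 if c = 0 and ε = 1 if c > 0. Let A₁ ≤ A₂ ≤ ... ≤ A_u be natural numbers with A₁ = 0, A₂ = c, and A_{i+2} − A_i ≥ N for all 1 ≤ i ≤ u − 2. Then there exist two weakly increasing sequences of natural numbers B₁ ≤ ... ≤ B_u and C₁ ≤ ... ≤ C_u such that A_i = B_i + C_i for all i, B₁ = 0, B₂ = ε, B_{i+2} − B_i ≥ 1 for all 1 ≤ i ≤ u − 2, and C_{i+2} − C_i ≥ N − 1 for all 1 ≤ i ≤ u − 2. -/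
/-!
Take `B = ⌈A / N⌉` and `C = A - B`. Ceiling division is monotone and subadditive, so
`a ↦ a - ⌈a / N⌉` is superadditive, hence monotone; an increase of `A` by at least `N`
raises `B` by at least `1` and, since `N - ⌈N / N⌉ = N - 1`, raises `C` by at least `N - 1`.
-/

namespace Nat

theorem ceilDiv_mono {N a b : ℕ} (h : a ≤ b) : a ⌈/⌉ N ≤ b ⌈/⌉ N := by
  simp only [ceilDiv_eq_add_pred_div]
  exact Nat.div_le_div_right (by omega)

theorem ceilDiv_le_self (a N : ℕ) : a ⌈/⌉ N ≤ a := by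
  rcases N.eq_zero_or_pos with rfl | hN
  · simp
  · exact (ceilDiv_le_iff_le_mul hN).2 (Nat.le_mul_of_pos_left a hN)

theorem add_ceilDiv_le (a b N : ℕ) : (a + b) ⌈/⌉ N ≤ a ⌈/⌉ N + b ⌈/⌉ N := by
  rcases N.eq_zero_or_pos with rfl | hN
  · simp
  · have le_mul_ceilDiv (x : ℕ) : x ≤ N * (x ⌈/⌉ N) := (ceilDiv_le_iff_le_mul hN).1 le_rfl
    rw [ceilDiv_le_iff_le_mul hN, Nat.mul_add]
    exact Nat.add_le_add (le_mul_ceilDiv a) (le_mul_ceilDiv b)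

theorem add_ceilDiv_self {N : ℕ} (hN : 0 < N) (a : ℕ) : (a + N) ⌈/⌉ N = a ⌈/⌉ N + 1 := by
  simp only [ceilDiv_eq_add_pred_div]
  rw [show a + N + N - 1 = a + N - 1 + N by omega, Nat.add_div_right _ hN]

theorem ceilDiv_eq_one {c N : ℕ} (hc0 : 0 < c) (hcN : c ≤ N) : c ⌈/⌉ N = 1 := by
  rw [ceilDiv_eq_add_pred_div, show c + N - 1 = c - 1 + N by omega,
    Nat.add_div_right _ (by omega), Nat.div_eq_of_lt (by omega)]

theorem sub_ceilDiv_add_sub_ceilDiv_le (a b N : ℕ) :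
    a - a ⌈/⌉ N + (b - b ⌈/⌉ N) ≤ a + b - (a + b) ⌈/⌉ N := by
  have := add_ceilDiv_le a b N
  have := ceilDiv_le_self a N
  have := ceilDiv_le_self b N
  omega

theorem sub_ceilDiv_mono (N : ℕ) : Monotone fun a : ℕ => a - a ⌈/⌉ N := by
  intro a b hab
  obtain ⟨d, rfl⟩ := Nat.exists_eq_add_of_le hab
  exact le_of_add_le_left (sub_ceilDiv_add_sub_ceilDiv_le a d N)

theorem ceilDiv_add_one_le {N a b : ℕ} (hN : 0 < N) (h : a + N ≤ b) :
    a ⌈/⌉ N + 1 ≤ b ⌈/⌉ N :=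
  add_ceilDiv_self hN a ▸ ceilDiv_mono h

theorem sub_ceilDiv_add_pred_le {N a b : ℕ} (hN : 0 < N) (h : a + N ≤ b) :
    a - a ⌈/⌉ N + (N - 1) ≤ b - b ⌈/⌉ N := by
  obtain ⟨d, rfl⟩ := Nat.exists_eq_add_of_le h
  have hN' : N - N ⌈/⌉ N = N - 1 := by rw [ceilDiv_eq_one hN le_rfl]
  calc a - a ⌈/⌉ N + (N - 1)
      ≤ a - a ⌈/⌉ N + (N + d - (N + d) ⌈/⌉ N) :=
        Nat.add_le_add_left (hN' ▸ sub_ceilDiv_mono N (Nat.le_add_right N d)) _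
    _ ≤ a + (N + d) - (a + (N + d)) ⌈/⌉ N := sub_ceilDiv_add_sub_ceilDiv_le a (N + d) N
    _ = a + N + d - (a + N + d) ⌈/⌉ N := by rw [Nat.add_assoc]

end Nat

theorem sequence_splitting_general (N u : ℕ) (hN : 2 ≤ N)
    (c : ℕ) (hc : c ≤ N) (A : ℕ → ℕ)
    (hmono : ∀ i, 1 ≤ i → i < u → A i ≤ A (i + 1))
    (hA1 : A 1 = 0) (hA2 : A 2 = c)
    (hgap : ∀ i, 1 ≤ i → i + 2 ≤ u → A i + N ≤ A (i + 2)) :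
    ∃ B C : ℕ → ℕ,
      (∀ i, 1 ≤ i → i < u → B i ≤ B (i + 1)) ∧
      (∀ i, 1 ≤ i → i < u → C i ≤ C (i + 1)) ∧
      (∀ i, 1 ≤ i → i ≤ u → A i = B i + C i) ∧
      B 1 = 0 ∧ B 2 = (if c = 0 then 0 else 1) ∧
      (∀ i, 1 ≤ i → i + 2 ≤ u → B i + 1 ≤ B (i + 2)) ∧
      (∀ i, 1 ≤ i → i + 2 ≤ u → C i + (N - 1) ≤ C (i + 2)) := by
  have hN0 : 0 < N := by omega
  refine ⟨fun i => A i ⌈/⌉ N, fun i => A i - A i ⌈/⌉ N,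
    fun i h1 h2 => Nat.ceilDiv_mono (hmono i h1 h2),
    fun i h1 h2 => Nat.sub_ceilDiv_mono N (hmono i h1 h2),
    fun i _ _ => (Nat.add_sub_of_le (Nat.ceilDiv_le_self (A i) N)).symm,
    by simp [hA1], ?_,
    fun i h1 h2 => Nat.ceilDiv_add_one_le hN0 (hgap i h1 h2),
    fun i h1 h2 => Nat.sub_ceilDiv_add_pred_le hN0 (hgap i h1 h2)⟩
  split_ifs with hc0
  · simp [hA2, hc0]
  · simpa [hA2] using Nat.ceilDiv_eq_one (Nat.pos_of_ne_zero hc0) hc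

theorem sequence_splitting (N u : ℕ) (hN : 2 ≤ N) (hu : 2 ≤ u)
    (c : ℕ) (hc : c ≤ N) (A : ℕ → ℕ)
    (hmono : ∀ i, 1 ≤ i → i < u → A i ≤ A (i + 1))
    (hA1 : A 1 = 0) (hA2 : A 2 = c)
    (hgap : ∀ i, 1 ≤ i → i + 2 ≤ u → A i + N ≤ A (i + 2)) :
    ∃ B C : ℕ → ℕ,
      (∀ i, 1 ≤ i → i < u → B i ≤ B (i + 1)) ∧
      (∀ i, 1 ≤ i → i < u → C i ≤ C (i + 1)) ∧
      (∀ i, 1 ≤ i → i ≤ u → A i = B i + C i) ∧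
      B 1 = 0 ∧ B 2 = (if c = 0 then 0 else 1) ∧
      (∀ i, 1 ≤ i → i + 2 ≤ u → B i + 1 ≤ B (i + 2)) ∧
      (∀ i, 1 ≤ i → i + 2 ≤ u → C i + (N - 1) ≤ C (i + 2)) :=
  sequence_splitting_general N u hN c hc A hmono hA1 hA2 hgap
end

section
/- Let (e, e') and (f, f') be pairs of natural numbers, and let λ be a bipartition of excess (e + f, e' + f'). Then there exist a bipartition μ of excess (e, e') and a bipartition ν of excess (f, f') such that λ = μ + ν (coordinate-wise), and moreover |μ| + |ν| = |λ|. -/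
/-- A bipartition: a sequence (indexed from 1; position 0 is unused and set to 0)
of naturals, eventually zero, with `λ₁ ≥ λ₃ ≥ λ₅ ≥ ⋯` and `λ₂ ≥ λ₄ ≥ λ₆ ≥ ⋯`. -/
def IsBipartition (l : ℕ → ℕ) : Prop :=
  l 0 = 0 ∧ (∀ i, 1 ≤ i → l (i + 2) ≤ l i) ∧ ∃ M, ∀ i, M ≤ i → l i = 0

/-- `λ` has excess `(e, e')`: `λ_i + e ≥ λ_{i+1}` for odd `i` and
`λ_i + e' ≥ λ_{i+1}` for even `i ≥ 2`. -/
def HasExcess (l : ℕ → ℕ) (e e' : ℕ) : Prop :=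
  ∀ i, 1 ≤ i → (Odd i → l (i + 1) ≤ l i + e) ∧ (Even i → l (i + 1) ≤ l i + e')

/-- `|λ| = n`. -/
def BSize (l : ℕ → ℕ) (n : ℕ) : Prop :=
  ∃ M, (∀ i, M ≤ i → l i = 0) ∧ (∑ i ∈ Finset.range M, l i) = n

/-!
Put `μ_i = φ (λ_i)` for odd `i`, `μ_i = ψ (λ_i)` for even `i`, and `ν = λ - μ`. If `φ, ψ` vanish
at `0`, are monotone and `1`-Lipschitz, and satisfy `ψ (x + e + f) = φ x + e` and
`φ (x + e' + f') = ψ x + e'`, then `μ` is a bipartition of excess `(e, e')`. The maps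
`x ↦ x - φ x`, `x ↦ x - ψ x` satisfy the same conditions with `(e, e')` and `(f, f')` swapped, so `ν`
is a bipartition of excess `(f, f')`. Such maps are counting functions: `φ x` counts the `t < x` in
a set of period `e + f + e' + f'` meeting each period in `[0, e') ∪ [e' + f', e' + f' + e)`, and `ψ`
counts the same set shifted by `e' + f'`.
-/

theorem Nat.count_add_le (p : ℕ → Prop) [DecidablePred p] (a b : ℕ) :
    Nat.count p (a + b) ≤ Nat.count p a + b := by
  rw [Nat.count_add]
  exact Nat.add_le_add_left (Nat.count_le _) _

def parityMap (φ ψ : ℕ → ℕ) (l : ℕ → ℕ) (i : ℕ) : ℕ :=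
  if Odd i then φ (l i) else ψ (l i)

section ParityMap

variable {φ ψ l : ℕ → ℕ}

theorem IsBipartition.parityMap (hl : IsBipartition l) (hφ : Monotone φ) (hψ : Monotone ψ)
    (hφ0 : φ 0 = 0) (hψ0 : ψ 0 = 0) : IsBipartition (parityMap φ ψ l) := by
  obtain ⟨hl0, hlmono, M, hM⟩ := hl
  refine ⟨by simp [_root_.parityMap, hl0, hψ0], fun i hi => ?_, M, fun i hi => ?_⟩
  · have hodd : Odd (i + 2) ↔ Odd i := by simp [Nat.odd_add_one]
    unfold _root_.parityMap
    rw [if_congr hodd rfl rfl]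
    split_ifs
    exacts [hφ (hlmono i hi), hψ (hlmono i hi)]
  · simp [_root_.parityMap, hM i hi, hφ0, hψ0]

theorem HasExcess.parityMap {e e' f f' : ℕ} (hl : HasExcess l (e + f) (e' + f'))
    (hφ : Monotone φ) (hψ : Monotone ψ) (hψφ : ∀ x, ψ (x + (e + f)) = φ x + e)
    (hφψ : ∀ x, φ (x + (e' + f')) = ψ x + e') : HasExcess (parityMap φ ψ l) e e' := by
  intro i hi
  refine ⟨fun hodd => ?_, fun heven => ?_⟩
  · have hsucc : ¬Odd (i + 1) := by simpa [Nat.odd_add_one] using hodd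
    simp only [_root_.parityMap, if_pos hodd, if_neg hsucc]
    calc ψ (l (i + 1)) ≤ ψ (l i + (e + f)) := hψ ((hl i hi).1 hodd)
      _ = φ (l i) + e := hψφ _
  · have hi' : ¬Odd i := Nat.not_odd_iff_even.mpr heven
    have hsucc : Odd (i + 1) := heven.add_one
    simp only [_root_.parityMap, if_neg hi', if_pos hsucc]
    calc φ (l (i + 1)) ≤ φ (l i + (e' + f')) := hφ ((hl i hi).2 heven)
      _ = ψ (l i) + e' := hφψ _

end ParityMap

structure IsExcessSplitting (e e' f f' : ℕ) (φ ψ : ℕ → ℕ) : Prop where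
  odd_zero : φ 0 = 0
  even_zero : ψ 0 = 0
  odd_mono : Monotone φ
  even_mono : Monotone ψ
  odd_add_le : ∀ x k, φ (x + k) ≤ φ x + k
  even_add_le : ∀ x k, ψ (x + k) ≤ ψ x + k
  even_add : ∀ x, ψ (x + (e + f)) = φ x + e
  odd_add : ∀ x, φ (x + (e' + f')) = ψ x + e'

namespace IsExcessSplitting

variable {e e' f f' : ℕ} {φ ψ : ℕ → ℕ}

theorem odd_le (h : IsExcessSplitting e e' f f' φ ψ) (x : ℕ) : φ x ≤ x := by
  simpa [h.odd_zero] using h.odd_add_le 0 x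

theorem even_le (h : IsExcessSplitting e e' f f' φ ψ) (x : ℕ) : ψ x ≤ x := by
  simpa [h.even_zero] using h.even_add_le 0 x

theorem compl (h : IsExcessSplitting e e' f f' φ ψ) :
    IsExcessSplitting f f' e e' (fun x => x - φ x) (fun x => x - ψ x) where
  odd_zero := by simp
  even_zero := by simp
  odd_mono := monotone_nat_of_le_succ fun x => by
    have := h.odd_add_le x 1; have := h.odd_le x; omega
  even_mono := monotone_nat_of_le_succ fun x => by
    have := h.even_add_le x 1; have := h.even_le x; omega
  odd_add_le x k := by
    have := h.odd_mono (Nat.le_add_right x k); have := h.odd_le x; omega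
  even_add_le x k := by
    have := h.even_mono (Nat.le_add_right x k); have := h.even_le x; omega
  even_add x := by
    show x + (f + e) - ψ (x + (f + e)) = x - φ x + f
    rw [add_comm f e]
    have := h.even_add x; have := h.odd_le x; omega
  odd_add x := by
    show x + (f' + e') - φ (x + (f' + e')) = x - ψ x + f'
    rw [add_comm f' e']
    have := h.odd_add x; have := h.even_le x; omega

theorem parityMap_add_compl (h : IsExcessSplitting e e' f f' φ ψ) (l : ℕ → ℕ) (i : ℕ) :
    l i = parityMap φ ψ l i + parityMap (fun x => x - φ x) (fun x => x - ψ x) l i := by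
  unfold parityMap
  split_ifs <;> dsimp only
  · have := h.odd_le (l i); omega
  · have := h.even_le (l i); omega

end IsExcessSplitting

section Construction

variable (e e' f f' : ℕ)

def excessPattern (t : ℕ) : Prop :=
  t % (e + f + (e' + f')) < e' ∨
    e' + f' ≤ t % (e + f + (e' + f')) ∧ t % (e + f + (e' + f')) < e' + f' + e

instance : DecidablePred (excessPattern e e' f f') := fun t => by
  unfold excessPattern; infer_instance

theorem excessPattern_iff_of_lt {t : ℕ} (ht : t < e + f + (e' + f')) :
    excessPattern e e' f f' t ↔ t < e' ∨ e' + f' ≤ t ∧ t < e' + f' + e := by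
  rw [excessPattern, Nat.mod_eq_of_lt ht]

theorem excessPattern_period_add (t : ℕ) :
    excessPattern e e' f f' (e + f + (e' + f') + t) ↔ excessPattern e e' f f' t := by
  rw [excessPattern, excessPattern, Nat.add_mod_left]

theorem count_excessPattern_shift :
    Nat.count (excessPattern e e' f f') (e' + f') = e' := by
  have hon : Nat.count (excessPattern e e' f f') e' = e' := Nat.count_iff_forall.mpr
    fun t ht => (excessPattern_iff_of_lt _ _ _ _ (by omega)).mpr (Or.inl ht)
  have hoff : Nat.count (fun k => excessPattern e e' f f' (e' + k)) f' = 0 :=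
    Nat.count_iff_forall_not.mpr fun t ht => by
      rw [excessPattern_iff_of_lt _ _ _ _ (by omega)]; omega
  rw [Nat.count_add, hon, hoff, add_zero]

theorem count_excessPattern_period :
    Nat.count (excessPattern e e' f f') (e + f + (e' + f')) = e + e' := by
  have hon : Nat.count (fun k => excessPattern e e' f f' (e' + f' + k)) e = e :=
    Nat.count_iff_forall.mpr fun t ht =>
      (excessPattern_iff_of_lt _ _ _ _ (by omega)).mpr (Or.inr (by omega))
  have hoff : Nat.count (fun k => excessPattern e e' f f' (e' + f' + e + k)) f = 0 :=
    Nat.count_iff_forall_not.mpr fun t ht => by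
      rw [excessPattern_iff_of_lt _ _ _ _ (by omega)]; omega
  rw [show e + f + (e' + f') = e' + f' + e + f by omega, Nat.count_add, Nat.count_add,
    count_excessPattern_shift, hon, hoff]
  omega

theorem exists_isExcessSplitting : ∃ φ ψ : ℕ → ℕ, IsExcessSplitting e e' f f' φ ψ := by
  set p := excessPattern e e' f f'
  have hshift : ∀ x, Nat.count p (e' + f' + x) = Nat.count (fun k => p (e' + f' + k)) x + e' :=
    fun x => by rw [Nat.count_add, count_excessPattern_shift]; omega
  refine ⟨Nat.count p, Nat.count fun k => p (e' + f' + k), ⟨Nat.count_zero _, Nat.count_zero _,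
    Nat.count_monotone _, Nat.count_monotone _, Nat.count_add_le _, Nat.count_add_le _,
    fun x => ?_, fun x => by rw [add_comm, hshift]⟩⟩
  have hperiod : Nat.count p (e + f + (e' + f') + x) = Nat.count p x + (e + e') := by
    rw [Nat.count_add, count_excessPattern_period, add_comm]
    congr 1
    simp [p, Nat.count_eq_card_filter_range, excessPattern_period_add]
  have := hshift (x + (e + f))
  rw [show e' + f' + (x + (e + f)) = e + f + (e' + f') + x by omega, hperiod] at this
  omega

end Construction

theorem exists_bSize_of_eq_add {l μ ν : ℕ → ℕ} (hsum : ∀ i, l i = μ i + ν i) {M : ℕ}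
    (hM : ∀ i, M ≤ i → l i = 0) : ∃ a b : ℕ, BSize μ a ∧ BSize ν b ∧ BSize l (a + b) := by
  refine ⟨_, _, ⟨M, fun i hi => ?_, rfl⟩, ⟨M, fun i hi => ?_, rfl⟩,
    ⟨M, hM, by rw [← Finset.sum_add_distrib]; exact Finset.sum_congr rfl fun i _ => hsum i⟩⟩
  all_goals have := hsum i; have := hM i hi; omega

theorem bipartition_excess_decompose (e e' f f' : ℕ) (l : ℕ → ℕ)
    (hl : IsBipartition l) (hle : HasExcess l (e + f) (e' + f')) :
    ∃ μ ν : ℕ → ℕ,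
      IsBipartition μ ∧ HasExcess μ e e' ∧
      IsBipartition ν ∧ HasExcess ν f f' ∧
      (∀ i, l i = μ i + ν i) ∧
      ∃ a b : ℕ, BSize μ a ∧ BSize ν b ∧ BSize l (a + b) := by
  obtain ⟨φ, ψ, h⟩ := exists_isExcessSplitting e e' f f'
  have hc := h.compl
  have hle' : HasExcess l (f + e) (f' + e') := by rwa [add_comm f, add_comm f']
  have hsum := h.parityMap_add_compl l
  refine ⟨_, _, hl.parityMap h.odd_mono h.even_mono h.odd_zero h.even_zero,
    hle.parityMap h.odd_mono h.even_mono h.even_add h.odd_add,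
    hl.parityMap hc.odd_mono hc.even_mono hc.odd_zero hc.even_zero,
    hle'.parityMap hc.odd_mono hc.even_mono hc.even_add hc.odd_add, hsum, ?_⟩
  obtain ⟨-, -, M, hM⟩ := hl
  exact exists_bSize_of_eq_add hsum hM
end

section
/- Coordinate-wise addition defines a surjective map BP_{1,0} × BP_{0,1} → BP_{1,1}, i.e. every bipartition of excess (1,1) is a sum of a bipartition of excess (1,0) and a bipartition of excess (0,1). -/
/-!
Halve every part of `λ`, rounding down in one summand and up in the other, and swap the roles
at every position. A step `λ_{i+1} ≤ λ_i + 1` then lets the summand that rounded `λ_i` down rise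
by one and forces the other one not to rise, which gives excess `(1, 0)` and `(0, 1)`.
-/

def alternatingHalf (l : ℕ → ℕ) (s i : ℕ) : ℕ :=
  if Odd (i + s) then l i / 2 else (l i + 1) / 2

theorem alternatingHalf_zero_add_one (l : ℕ → ℕ) (i : ℕ) :
    alternatingHalf l 0 i + alternatingHalf l 1 i = l i := by
  unfold alternatingHalf
  rcases Nat.even_or_odd i with h | h
  · simp only [add_zero, Nat.not_odd_iff_even.mpr h, h.add_one, if_true, if_false]; omega
  · simp only [add_zero, h, Nat.not_odd_iff_even.mpr h.add_one, if_true, if_false]; omega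

section alternatingHalf

variable {l : ℕ → ℕ}

theorem alternatingHalf_add_two_le {s i : ℕ} (h : l (i + 2) ≤ l i) :
    alternatingHalf l s (i + 2) ≤ alternatingHalf l s i := by
  have hpar : Odd (i + 2 + s) ↔ Odd (i + s) := by
    rw [add_right_comm, Nat.odd_add]; simp
  unfold alternatingHalf
  simp only [hpar]
  split_ifs <;> omega

theorem alternatingHalf_succ_le {s i : ℕ} (h : l (i + 1) ≤ l i + 1) :
    alternatingHalf l s (i + 1) ≤ alternatingHalf l s i + if Odd (i + s) then 1 else 0 := by
  have hpar : Odd (i + 1 + s) ↔ ¬Odd (i + s) := by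
    rw [add_right_comm, Nat.odd_add_one]
  unfold alternatingHalf
  simp only [hpar]
  split_ifs <;> omega

theorem IsBipartition.alternatingHalf (hl : IsBipartition l) (s : ℕ) :
    IsBipartition (alternatingHalf l s) := by
  obtain ⟨h0, hmono, M, hM⟩ := hl
  refine ⟨by simp [_root_.alternatingHalf, h0], fun i hi ↦ alternatingHalf_add_two_le (hmono i hi),
    M, fun i hi ↦ ?_⟩
  simp [_root_.alternatingHalf, hM i hi]

end alternatingHalf

theorem HasExcess.succ_le_add {l : ℕ → ℕ} {e : ℕ} (h : HasExcess l e e) {i : ℕ} (hi : 1 ≤ i) :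
    l (i + 1) ≤ l i + e := by
  rcases Nat.even_or_odd i with hev | hodd
  · exact (h i hi).2 hev
  · exact (h i hi).1 hodd

theorem HasExcess.alternatingHalf_zero {l : ℕ → ℕ} (h : HasExcess l 1 1) :
    HasExcess (alternatingHalf l 0) 1 0 := by
  refine fun i hi ↦ ⟨fun hodd ↦ ?_, fun hev ↦ ?_⟩ <;>
    have := alternatingHalf_succ_le (s := 0) (h.succ_le_add hi)
  · simpa [hodd] using this
  · simpa [Nat.not_odd_iff_even.mpr hev] using this

theorem HasExcess.alternatingHalf_one {l : ℕ → ℕ} (h : HasExcess l 1 1) :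
    HasExcess (alternatingHalf l 1) 0 1 := by
  refine fun i hi ↦ ⟨fun hodd ↦ ?_, fun hev ↦ ?_⟩ <;>
    have := alternatingHalf_succ_le (s := 1) (h.succ_le_add hi)
  · simpa [Nat.not_odd_iff_even.mpr hodd.add_one] using this
  · simpa [hev.add_one] using this

theorem excess_one_one_decompose (l : ℕ → ℕ)
    (hl : IsBipartition l) (hle : HasExcess l 1 1) :
    ∃ μ ν : ℕ → ℕ,
      IsBipartition μ ∧ HasExcess μ 1 0 ∧
      IsBipartition ν ∧ HasExcess ν 0 1 ∧
      ∀ i, l i = μ i + ν i :=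
  ⟨alternatingHalf l 0, alternatingHalf l 1, hl.alternatingHalf 0, hle.alternatingHalf_zero,
    hl.alternatingHalf 1, hle.alternatingHalf_one, fun i ↦ (alternatingHalf_zero_add_one l i).symm⟩
end

section
/- Every bipartition of excess (2,0) is the coordinate-wise sum of two bipartitions each of excess (1,0). -/
/-!
Split every part into its two halves: `λ = ⌈λ/2⌉ + ⌊λ/2⌋`. Both halvings are monotone and fix `0`,
so they preserve bipartitions, and they turn a rise of at most `2` into a rise of at most `1`.
-/

theorem IsBipartition.comp_of_monotone {l f : ℕ → ℕ} (hl : IsBipartition l) (hf : Monotone f)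
    (hf0 : f 0 = 0) : IsBipartition (f ∘ l) := by
  obtain ⟨hl0, hdecr, M, hM⟩ := hl
  refine ⟨by simp [hl0, hf0], fun i hi => hf (hdecr i hi), M, fun i hi => ?_⟩
  simp [hM i hi, hf0]

theorem HasExcess.comp {l f : ℕ → ℕ} {e e' d d' : ℕ} (hl : HasExcess l e e')
    (hf : ∀ a b, b ≤ a + e → f b ≤ f a + d) (hf' : ∀ a b, b ≤ a + e' → f b ≤ f a + d') :
    HasExcess (f ∘ l) d d' := fun i hi =>
  ⟨fun hodd => hf _ _ ((hl i hi).1 hodd), fun heven => hf' _ _ ((hl i hi).2 heven)⟩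

theorem excess_two_zero_decompose (l : ℕ → ℕ)
    (hl : IsBipartition l) (hle : HasExcess l 2 0) :
    ∃ μ ν : ℕ → ℕ,
      IsBipartition μ ∧ HasExcess μ 1 0 ∧
      IsBipartition ν ∧ HasExcess ν 1 0 ∧
      ∀ i, l i = μ i + ν i := by
  refine ⟨(fun n => (n + 1) / 2) ∘ l, (· / 2) ∘ l, ?_, ?_, ?_, ?_, fun i => by simp only [Function.comp_apply]; omega⟩
  · exact hl.comp_of_monotone (fun a b hab => by omega) rfl
  · exact hle.comp (fun a b hab => by omega) (fun a b hab => by omega)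
  · exact hl.comp_of_monotone (fun a b hab => Nat.div_le_div_right hab) rfl
  · exact hle.comp (fun a b hab => by omega) (fun a b hab => by omega)
end

section
/- Every bipartition of excess (2,2) is the coordinate-wise sum of a bipartition of excess (2,0) and a bipartition of excess (0,2). -/
/-! Induction on the number of parts. If `tail λ = μ' + ν'` with `μ'` of excess `(2,0)` and `ν'` of
excess `(0,2)`, then `λ = cons b ν' + cons a μ'` for suitable `a + b = λ₁`, because prepending a part
swaps the two excesses. For `a` and `b` to exist, the decomposition of the tail must leave room for
every admissible first part; this invariant (`IsExcessSplit.extendable`) is preserved by the greedy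
choice `a = max (μ'₁, μ'₂, λ₁ - ν'₁)`. -/

def consPart (a : ℕ) (l : ℕ → ℕ) : ℕ → ℕ
  | 0 => 0
  | 1 => a
  | i + 2 => l (i + 1)

def tailPart (l : ℕ → ℕ) : ℕ → ℕ
  | 0 => 0
  | i + 1 => l (i + 2)

theorem consPart_tailPart {l : ℕ → ℕ} (h0 : l 0 = 0) : consPart (l 1) (tailPart l) = l := by
  funext i
  rcases i with _ | _ | i
  · exact h0.symm
  · rfl
  · rfl

theorem IsBipartition.consPart {μ : ℕ → ℕ} {a : ℕ} (h : IsBipartition μ) (ha : μ 2 ≤ a) :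
    IsBipartition (consPart a μ) := by
  obtain ⟨-, hdec, M, hM⟩ := h
  refine ⟨rfl, ?_, M + 2, ?_⟩
  · rintro (_ | _ | i) hi
    · omega
    · exact ha
    · exact hdec (i + 1) (by omega)
  · rintro (_ | _ | i) hi
    · omega
    · omega
    · exact hM (i + 1) (by omega)

theorem IsBipartition.tailPart {l : ℕ → ℕ} (h : IsBipartition l) : IsBipartition (tailPart l) := by
  obtain ⟨-, hdec, M, hM⟩ := h
  refine ⟨rfl, ?_, M, ?_⟩
  · rintro (_ | i) hi
    · omega
    · exact hdec (i + 2) (by omega)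
  · rintro (_ | i) hi
    · rfl
    · exact hM (i + 2) (by omega)

theorem tailPart_eq_zero {l : ℕ → ℕ} {M : ℕ} (hM : ∀ i, M + 1 ≤ i → l i = 0) :
    ∀ i, M ≤ i → tailPart l i = 0
  | 0, _ => rfl
  | i + 1, hi => hM (i + 2) (by omega)

theorem HasExcess.consPart {μ : ℕ → ℕ} {a e e' : ℕ} (h : HasExcess μ e e') (ha : μ 1 ≤ a + e') :
    HasExcess (consPart a μ) e' e := by
  rintro (_ | _ | i) hi
  · omega
  · exact ⟨fun _ => ha, fun heven => absurd heven (by decide)⟩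
  · have hodd : Odd (i + 2) ↔ Even (i + 1) := by simp [parity_simps]
    have heven : Even (i + 2) ↔ Odd (i + 1) := by simp [parity_simps]
    exact ⟨fun hi' => (h (i + 1) (by omega)).2 (hodd.1 hi'),
      fun hi' => (h (i + 1) (by omega)).1 (heven.1 hi')⟩

theorem HasExcess.tailPart {l : ℕ → ℕ} {e e' : ℕ} (h : HasExcess l e e') :
    HasExcess (tailPart l) e' e := by
  rintro (_ | i) hi
  · omega
  · have hodd : Odd (i + 1) ↔ Even (i + 2) := by simp [parity_simps]
    have heven : Even (i + 1) ↔ Odd (i + 2) := by simp [parity_simps]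
    exact ⟨fun hi' => (h (i + 2) (by omega)).2 (hodd.1 hi'),
      fun hi' => (h (i + 2) (by omega)).1 (heven.1 hi')⟩

theorem exists_split_first_part {c m₁ m₂ n₁ n₂ : ℕ} (hm : m₂ ≤ m₁ + 2) (hn : n₂ ≤ n₁)
    (hc : max m₁ m₂ + max (n₁ - 2) n₂ ≤ c) :
    ∃ a b, a + b = c ∧ m₁ ≤ a ∧ m₂ ≤ a ∧ n₁ ≤ b + 2 ∧ n₂ ≤ b ∧
      max b n₁ + max (a - 2) m₁ ≤ max (c - 2) (m₁ + n₁) :=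
  ⟨max (max m₁ m₂) (c - n₁), c - max (max m₁ m₂) (c - n₁), by omega⟩

structure IsExcessSplit (l μ ν : ℕ → ℕ) : Prop where
  isBipartition_left : IsBipartition μ
  hasExcess_left : HasExcess μ 2 0
  isBipartition_right : IsBipartition ν
  hasExcess_right : HasExcess ν 0 2
  eq_add : ∀ i, l i = μ i + ν i
  /-- `max (l 1 - 2) (l 2)` is the least part that can be prepended to `l`, and the left-hand side
  the least one that can be split between `μ` and `ν` (see `exists_split_first_part`). -/
  extendable : max (μ 1) (μ 2) + max (ν 1 - 2) (ν 2) ≤ max (l 1 - 2) (l 2)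

theorem hasExcess_zero (e e' : ℕ) : HasExcess 0 e e' :=
  fun _ _ => ⟨fun _ => Nat.zero_le _, fun _ => Nat.zero_le _⟩

theorem isBipartition_zero : IsBipartition 0 :=
  ⟨rfl, fun _ _ => le_rfl, 0, fun _ _ => rfl⟩

theorem isExcessSplit_zero : IsExcessSplit 0 0 0 where
  isBipartition_left := isBipartition_zero
  hasExcess_left := hasExcess_zero 2 0
  isBipartition_right := isBipartition_zero
  hasExcess_right := hasExcess_zero 0 2
  eq_add _ := rfl
  extendable := le_rfl

theorem IsExcessSplit.exists_consPart {l μ ν : ℕ → ℕ} {c : ℕ} (h : IsExcessSplit l μ ν)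
    (hc : max (l 1 - 2) (l 2) ≤ c) : ∃ μ₀ ν₀, IsExcessSplit (consPart c l) μ₀ ν₀ := by
  have hμ : μ 2 ≤ μ 1 + 2 := (h.hasExcess_left 1 le_rfl).1 odd_one
  have hν : ν 2 ≤ ν 1 + 0 := (h.hasExcess_right 1 le_rfl).1 odd_one
  obtain ⟨a, b, hab, hμ₁, hμ₂, hν₁, hν₂, hext⟩ :=
    exists_split_first_part hμ hν (h.extendable.trans hc)
  refine ⟨consPart b ν, consPart a μ, h.isBipartition_right.consPart hν₂,
    h.hasExcess_right.consPart hν₁, h.isBipartition_left.consPart hμ₂,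
    h.hasExcess_left.consPart hμ₁, ?_, ?_⟩
  · rintro (_ | _ | i)
    · rfl
    · exact hab.symm.trans (add_comm a b)
    · exact (h.eq_add (i + 1)).trans (add_comm _ _)
  · show max b (ν 1) + max (a - 2) (μ 1) ≤ max (c - 2) (l 1)
    rwa [h.eq_add 1]

theorem exists_isExcessSplit {M : ℕ} {l : ℕ → ℕ} (hM : ∀ i, M ≤ i → l i = 0)
    (hl : IsBipartition l) (hle : HasExcess l 2 2) : ∃ μ ν, IsExcessSplit l μ ν := by
  induction M generalizing l with
  | zero =>
    obtain rfl : l = 0 := funext fun i => hM i (Nat.zero_le i)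
    exact ⟨0, 0, isExcessSplit_zero⟩
  | succ M ih =>
    obtain ⟨μ, ν, h⟩ := ih (tailPart_eq_zero hM) hl.tailPart hle.tailPart
    have hc : max (l 2 - 2) (l 3) ≤ l 1 :=
      max_le (Nat.sub_le_of_le_add ((hle 1 le_rfl).1 odd_one)) (hl.2.1 1 le_rfl)
    exact consPart_tailPart hl.1 ▸ h.exists_consPart hc

theorem excess_two_two_decompose (l : ℕ → ℕ)
    (hl : IsBipartition l) (hle : HasExcess l 2 2) :
    ∃ μ ν : ℕ → ℕ,
      IsBipartition μ ∧ HasExcess μ 2 0 ∧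
      IsBipartition ν ∧ HasExcess ν 0 2 ∧
      ∀ i, l i = μ i + ν i := by
  have ⟨_, _, M, hM⟩ := hl
  obtain ⟨μ, ν, h⟩ := exists_isExcessSplit hM hl hle
  exact ⟨μ, ν, h.isBipartition_left, h.hasExcess_left, h.isBipartition_right, h.hasExcess_right,
    h.eq_add⟩
end

section
/- Fix (e, e') ∈ ℕ × ℕ, n ∈ ℕ, and m large enough that λ_{2m} = λ_{2m+1} = 0 for all λ ∈ BP^n_{e,e'}. The map κ sending λ = (λ₁, λ₂, λ₃, ...) to Λ = (Λ₁, ..., Λ_{2m+1}) with Λ_{2k+1} = λ_{2k+1} + (m−k)(e+e') for 0 ≤ k ≤ m and Λ_{2k} = λ_{2k} + (m−k)e + (m−k+1)e' for 1 ≤ k ≤ m is an injection from BP^n_{e,e'} into the set of sequences Λ₁ ≥ Λ₂ ≥ ... ≥ Λ_{2m+1} of naturals with Λ_i − Λ_{i+2} ≥ e + e' for 1 ≤ i ≤ 2m − 1, Λ_{2m} = e', and Λ_{2m+1} = 0. -/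
/-- The map κ of 2.2: Λ_{2k+1} = λ_{2k+1} + (m−k)(e+e'),
Λ_{2k} = λ_{2k} + (m−k)e + (m−k+1)e'. -/
def kappaMap (e e' m : ℕ) (l : ℕ → ℕ) : ℕ → ℕ := fun i =>
  if i % 2 = 1 then l i + ((2 * m + 1 - i) / 2) * (e + e')
  else l i + ((2 * m - i) / 2) * e + ((2 * m - i) / 2 + 1) * e'


/-!
κ adds to `λ_i` the offset `κ(0)_i`, which depends on `i` alone. Consecutive offsets differ by `e'`
after an even index and by `e` after an odd one, which are exactly the excess bounds on
`λ_{i+1} - λ_i`, so `Λ` decreases; offsets two indices apart differ by `e + e'` while `λ` itself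
decreases in steps of two. Injectivity holds because the offsets cancel on `1, …, 2m+1` and
`λ` vanishes from `2m` on.
-/

theorem kappaMap_apply (e e' m : ℕ) (l : ℕ → ℕ) (i : ℕ) :
    kappaMap e e' m l i = l i + kappaMap e e' m 0 i := by
  unfold kappaMap
  split_ifs <;> simp only [Pi.zero_apply, zero_add, add_assoc]

theorem kappaMap_zero_apply (e e' m i : ℕ) :
    kappaMap e e' m 0 i = (2 * m + 1 - i) / 2 * (e + e') + if Even i then e' else 0 := by
  unfold kappaMap
  by_cases h : i % 2 = 1
  · rw [if_pos h, if_neg (by rwa [Nat.not_even_iff_odd, Nat.odd_iff])]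
    simp
  · rw [if_neg h, if_pos (Nat.even_iff.2 (by omega)),
      show (2 * m - i) / 2 = (2 * m + 1 - i) / 2 by omega]
    simp only [Pi.zero_apply]
    ring

section

variable {e e' m i : ℕ}

theorem kappaMap_zero_eq_succ_add (hi : i ≤ 2 * m) :
    kappaMap e e' m 0 i = kappaMap e e' m 0 (i + 1) + if Even i then e' else e := by
  simp only [kappaMap_zero_apply, Nat.even_add_one]
  rcases Nat.even_or_odd' i with ⟨k, rfl | rfl⟩
  · rw [show (2 * m + 1 - 2 * k) / 2 = (2 * m + 1 - (2 * k + 1)) / 2 by omega]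
    simp
  · rw [show (2 * m + 1 - (2 * k + 1)) / 2 = (2 * m + 1 - (2 * k + 1 + 1)) / 2 + 1 by omega]
    simp only [Nat.not_even_two_mul_add_one, if_false, not_false_eq_true, if_true]
    ring

theorem kappaMap_zero_eq_add_two_add (hi : i + 1 ≤ 2 * m) :
    kappaMap e e' m 0 i = kappaMap e e' m 0 (i + 2) + (e + e') := by
  simp only [kappaMap_zero_apply, Nat.even_add, even_two, iff_true]
  rw [show (2 * m + 1 - i) / 2 = (2 * m + 1 - (i + 2)) / 2 + 1 by omega]
  ring

theorem HasExcess.le_add_ite {l : ℕ → ℕ} (h : HasExcess l e e') (hi : 1 ≤ i) :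
    l (i + 1) ≤ l i + if Even i then e' else e := by
  split_ifs with heven
  · exact (h i hi).2 heven
  · exact (h i hi).1 (Nat.not_even_iff_odd.1 heven)

theorem IsBipartition.eq_zero_of_le {l : ℕ → ℕ} {j : ℕ} (h : IsBipartition l) (hj : 1 ≤ j)
    (h₀ : l j = 0) (h₁ : l (j + 1) = 0) {i : ℕ} (hi : j ≤ i) : l i = 0 := by
  suffices ∀ i, j ≤ i → l i = 0 ∧ l (i + 1) = 0 from (this i hi).1
  refine fun i hi ↦ Nat.le_induction ⟨h₀, h₁⟩ (fun k hk ih ↦ ⟨ih.2, ?_⟩) i hi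
  exact Nat.eq_zero_of_le_zero (ih.1 ▸ h.2.1 k (by omega))

theorem kappaMap_succ_le {l : ℕ → ℕ} (hl : HasExcess l e e') (hi : 1 ≤ i) (hi' : i ≤ 2 * m) :
    kappaMap e e' m l (i + 1) ≤ kappaMap e e' m l i := by
  rw [kappaMap_apply, kappaMap_apply _ _ _ l i, kappaMap_zero_eq_succ_add hi']
  have := hl.le_add_ite hi
  omega

theorem kappaMap_add_two_add_le {l : ℕ → ℕ} (hl : IsBipartition l) (hi : 1 ≤ i)
    (hi' : i + 1 ≤ 2 * m) :
    kappaMap e e' m l (i + 2) + (e + e') ≤ kappaMap e e' m l i := by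
  rw [kappaMap_apply, kappaMap_apply _ _ _ l i, kappaMap_zero_eq_add_two_add hi']
  have := hl.2.1 i hi
  omega

theorem kappaMap_two_mul {l : ℕ → ℕ} (hl : l (2 * m) = 0) : kappaMap e e' m l (2 * m) = e' := by
  rw [kappaMap_apply, kappaMap_zero_apply, hl]
  simp

theorem kappaMap_two_mul_add_one {l : ℕ → ℕ} (hl : l (2 * m + 1) = 0) :
    kappaMap e e' m l (2 * m + 1) = 0 := by
  rw [kappaMap_apply, kappaMap_zero_apply, hl]
  simp

end

theorem kappa_injection (e e' n m : ℕ) (hm : 1 ≤ m)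
    (hlarge : ∀ l : ℕ → ℕ, IsBipartition l → HasExcess l e e' → BSize l n →
      l (2 * m) = 0 ∧ l (2 * m + 1) = 0) :
    (∀ l : ℕ → ℕ, IsBipartition l → HasExcess l e e' → BSize l n →
      (∀ i, 1 ≤ i → i ≤ 2 * m → kappaMap e e' m l (i + 1) ≤ kappaMap e e' m l i) ∧
      (∀ i, 1 ≤ i → i ≤ 2 * m - 1 →
        kappaMap e e' m l (i + 2) + (e + e') ≤ kappaMap e e' m l i) ∧
      kappaMap e e' m l (2 * m) = e' ∧ kappaMap e e' m l (2 * m + 1) = 0) ∧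
    (∀ l l' : ℕ → ℕ,
      IsBipartition l → HasExcess l e e' → BSize l n →
      IsBipartition l' → HasExcess l' e e' → BSize l' n →
      (∀ i, 1 ≤ i → i ≤ 2 * m + 1 → kappaMap e e' m l i = kappaMap e e' m l' i) →
      l = l') := by
  refine ⟨fun l hl hexc hsize ↦ ?_, fun l l' hl hexc hsize hl' hexc' hsize' hκ ↦ ?_⟩
  · obtain ⟨h₀, h₁⟩ := hlarge l hl hexc hsize
    exact ⟨fun i hi hi' ↦ kappaMap_succ_le hexc hi hi',
      fun i hi hi' ↦ kappaMap_add_two_add_le hl hi (by omega),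
      kappaMap_two_mul h₀, kappaMap_two_mul_add_one h₁⟩
  · obtain ⟨h₀, h₁⟩ := hlarge l hl hexc hsize
    obtain ⟨h₀', h₁'⟩ := hlarge l' hl' hexc' hsize'
    have hm' : 1 ≤ 2 * m := by omega
    funext i
    rcases Nat.eq_zero_or_pos i with rfl | hi
    · rw [hl.1, hl'.1]
    rcases le_or_gt i (2 * m + 1) with hi' | hi'
    · have := hκ i hi hi'
      rwa [kappaMap_apply, kappaMap_apply _ _ _ l', add_left_inj] at this
    · rw [hl.eq_zero_of_le hm' h₀ h₁ (by omega), hl'.eq_zero_of_le hm' h₀' h₁' (by omega)]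
end

section
/- For any (f, f') ∈ ℕ × ℕ and any Λ = (Λ₁, ..., Λ_{2m+1}) ∈ ᵐB̂P_{f,f'}, there exist Λ¹, ..., Λ^f in ᵐB̂P_{1,0}, Λ'¹, ..., Λ'^{f'} in ᵐB̂P_{0,1}, and Λ̃⁰ ∈ ᵐB̂P_{0,0} such that Λ = Λ¹ + ⋯ + Λ^f + Λ'¹ + ⋯ + Λ'^{f'} + Λ̃⁰, where addition is coordinate-wise. -/
/-!
Everything is read off the drops `d j = Λ j - Λ (j + 1)`: `Λ ∈ ᵐB̂P_{e,e'}` iff `Λ` is the tail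
sum of `d`, `d j + d (j + 1) ≥ e + e'` for `1 ≤ j ≤ 2m - 1`, and `d (2m) = e'`.

With `s = f + f'`, spread each drop over the pieces `0, …, s - 1` like a staircase, at most one
unit per piece: at an odd position `j` it feeds the lowest pieces `k < d j`, at an even one the
highest pieces `k ≥ s - d j`; the excess over `s` goes to the remainder. As `d j + d (j + 1) ≥ s`,
two consecutive positions together feed every piece. The last position `2m` is even with
`d (2m) = f'`, so it feeds exactly the top `f'` pieces: these lie in `ᵐB̂P_{0,1}`, the other `f`
in `ᵐB̂P_{1,0}`.
-/

/-- The set ᵐB̂P_{e,e'}: sequences Λ₁ ≥ Λ₂ ≥ ⋯ ≥ Λ_{2m+1} of naturals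
(indexed from 1) with Λ_i − Λ_{i+2} ≥ e + e' for 1 ≤ i ≤ 2m−1, Λ_{2m} = e',
Λ_{2m+1} = 0. -/
def HatBP (m e e' : ℕ) (L : ℕ → ℕ) : Prop :=
  (∀ i, 1 ≤ i → i ≤ 2 * m → L (i + 1) ≤ L i) ∧
  (∀ i, 1 ≤ i → i ≤ 2 * m - 1 → L (i + 2) + (e + e') ≤ L i) ∧
  L (2 * m) = e' ∧ L (2 * m + 1) = 0

namespace HatBP

open Finset

def drop (L : ℕ → ℕ) (j : ℕ) : ℕ := L j - L (j + 1)

def tailSum (n : ℕ) (d : ℕ → ℕ) (i : ℕ) : ℕ := ∑ j ∈ Ico i n, d j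

def stair (s : ℕ) (d : ℕ → ℕ) (k j : ℕ) : ℕ :=
  if Even j then (if s ≤ d j + k then 1 else 0) else (if k < d j then 1 else 0)

section tailSum

variable {n i : ℕ} {d : ℕ → ℕ}

@[simp]
lemma tailSum_self : tailSum n d n = 0 := by simp [tailSum]

lemma tailSum_of_lt (h : i < n) : tailSum n d i = d i + tailSum n d (i + 1) :=
  sum_eq_sum_Ico_succ_bot h d

lemma tailSum_add (d' : ℕ → ℕ) : tailSum n (d + d') i = tailSum n d i + tailSum n d' i :=
  sum_add_distrib

lemma tailSum_sum {ι : Type*} (t : Finset ι) (d : ι → ℕ → ℕ) :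
    tailSum n (∑ k ∈ t, d k) i = ∑ k ∈ t, tailSum n (d k) i := by
  simp only [tailSum, Finset.sum_apply]
  exact sum_comm

lemma tailSum_drop {a : ℕ} {L : ℕ → ℕ} (hL : ∀ j, a ≤ j → j < n → L (j + 1) ≤ L j)
    (hn : L n = 0) (hai : a ≤ i) (hin : i ≤ n) : tailSum n (drop L) i = L i := by
  induction hin using Nat.decreasingInduction with
  | self => simp [hn]
  | of_succ k hk ih =>
    rw [tailSum_of_lt hk, ih (by omega), drop]
    have := hL k hai hk
    omega

end tailSum

section stair

variable {s : ℕ} {d : ℕ → ℕ}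

lemma stair_of_even {k j : ℕ} (hj : Even j) : stair s d k j = if s ≤ d j + k then 1 else 0 :=
  if_pos hj

lemma one_le_stair_add_stair {k j : ℕ} (hd : s ≤ d j + d (j + 1)) :
    1 ≤ stair s d k j + stair s d k (j + 1) := by
  rcases Nat.even_or_odd j with hj | hj
  · have hj' : ¬Even (j + 1) := by simpa [Nat.even_add_one] using hj
    simp only [stair, hj, hj', if_true, if_false]
    split_ifs <;> omega
  · have hj' : Even (j + 1) := hj.add_one
    simp only [stair, Nat.not_even_iff_odd.mpr hj, hj', if_true, if_false]
    split_ifs <;> omega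

lemma sum_range_ite_lt (s c : ℕ) : ∑ k ∈ range s, (if k < c then 1 else 0) = min c s := by
  induction s with
  | zero => simp
  | succ s ih =>
    rw [sum_range_succ, ih]
    split_ifs <;> omega

lemma sum_stair (j : ℕ) : ∑ k ∈ range s, stair s d k j = min (d j) s := by
  by_cases hj : Even j
  · rw [← sum_range_ite_lt, ← sum_range_reflect]
    refine sum_congr rfl fun k hk => ?_
    rw [stair_of_even hj]
    have := mem_range.mp hk
    split_ifs <;> omega
  · simp only [stair, hj, if_false]
    exact sum_range_ite_lt s (d j)

end stair

variable {m e e' : ℕ}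

lemma hatBP_tailSum {d : ℕ → ℕ} (hpair : ∀ i, 1 ≤ i → i ≤ 2 * m - 1 → e + e' ≤ d i + d (i + 1))
    (hlast : d (2 * m) = e') : HatBP m e e' (tailSum (2 * m + 1) d) := by
  refine ⟨fun i _ hi => ?_, fun i h1 hi => ?_, ?_, tailSum_self⟩
  · rw [tailSum_of_lt (i := i) (by omega)]
    omega
  · have hsplit : tailSum (2 * m + 1) d i = d i + d (i + 1) + tailSum (2 * m + 1) d (i + 2) := by
      rw [tailSum_of_lt (by omega), tailSum_of_lt (by omega), ← add_assoc]
    have := hpair i h1 hi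
    omega
  · rw [tailSum_of_lt (by omega), tailSum_self, hlast, add_zero]

lemma hatBP_tailSum_stair {s k : ℕ} {d : ℕ → ℕ}
    (hpair : ∀ i, 1 ≤ i → i ≤ 2 * m - 1 → s ≤ d i + d (i + 1)) (he : e + e' = 1)
    (hlast : stair s d k (2 * m) = e') : HatBP m e e' (tailSum (2 * m + 1) (stair s d k)) :=
  hatBP_tailSum (fun i h1 h2 => he ▸ one_le_stair_add_stair (hpair i h1 h2)) hlast

variable {L : ℕ → ℕ}

lemma eq_tailSum_drop (hL : HatBP m e e' L) {i : ℕ} (h1 : 1 ≤ i) (h2 : i ≤ 2 * m + 1) :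
    L i = tailSum (2 * m + 1) (drop L) i :=
  (tailSum_drop (fun j h1 h2 => hL.1 j h1 (by omega)) hL.2.2.2 h1 h2).symm

lemma le_drop_add_drop (hL : HatBP m e e' L) (i : ℕ) (h1 : 1 ≤ i) (h2 : i ≤ 2 * m - 1) :
    e + e' ≤ drop L i + drop L (i + 1) := by
  have := hL.1 i h1 (by omega)
  have := hL.1 (i + 1) (by omega) (by omega)
  have := hL.2.1 i h1 h2
  change e + e' ≤ L i - L (i + 1) + (L (i + 1) - L (i + 2))
  omega

lemma drop_two_mul (hL : HatBP m e e' L) : drop L (2 * m) = e' := by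
  simp [drop, hL.2.2.1, hL.2.2.2]

end HatBP

theorem hatBP_decompose_general (m f f' : ℕ)
    (L : ℕ → ℕ) (hL : HatBP m f f' L) :
    ∃ (F : Fin f → ℕ → ℕ) (F' : Fin f' → ℕ → ℕ) (L0 : ℕ → ℕ),
      (∀ j, HatBP m 1 0 (F j)) ∧ (∀ j, HatBP m 0 1 (F' j)) ∧ HatBP m 0 0 L0 ∧
      ∀ i, 1 ≤ i → i ≤ 2 * m + 1 →
        L i = (∑ j, F j i) + (∑ j, F' j i) + L0 i := by
  have hpair := hL.le_drop_add_drop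
  have hlast := hL.drop_two_mul
  have hstair (k : ℕ) : HatBP.stair (f + f') (HatBP.drop L) k (2 * m) = if f ≤ k then 1 else 0 := by
    rw [HatBP.stair_of_even (even_two_mul m), hlast]
    simp only [add_comm f f', add_le_add_iff_left]
  refine ⟨fun j => HatBP.tailSum (2 * m + 1) (HatBP.stair (f + f') (HatBP.drop L) j),
    fun j => HatBP.tailSum (2 * m + 1) (HatBP.stair (f + f') (HatBP.drop L) (f + j)),
    HatBP.tailSum (2 * m + 1) (fun j => HatBP.drop L j - min (HatBP.drop L j) (f + f')),
    fun j => HatBP.hatBP_tailSum_stair hpair rfl (by simp [hstair, j.2]),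
    fun j => HatBP.hatBP_tailSum_stair hpair rfl (by simp [hstair]),
    HatBP.hatBP_tailSum (fun _ _ _ => Nat.zero_le _) (by simp [hlast]), fun i h1 h2 => ?_⟩
  beta_reduce
  rw [hL.eq_tailSum_drop h1 h2,
    Fin.sum_univ_eq_sum_range (fun j => HatBP.tailSum _ (HatBP.stair _ _ j) i),
    Fin.sum_univ_eq_sum_range (fun j => HatBP.tailSum _ (HatBP.stair _ _ (f + j)) i),
    ← Finset.sum_range_add,
    ← HatBP.tailSum_sum, ← HatBP.tailSum_add]
  congr 1
  funext j
  simp only [Pi.add_apply, Finset.sum_apply, HatBP.sum_stair]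
  omega

theorem hatBP_decompose (m f f' : ℕ) (hm : 1 ≤ m)
    (L : ℕ → ℕ) (hL : HatBP m f f' L) :
    ∃ (F : Fin f → ℕ → ℕ) (F' : Fin f' → ℕ → ℕ) (L0 : ℕ → ℕ),
      (∀ j, HatBP m 1 0 (F j)) ∧ (∀ j, HatBP m 0 1 (F' j)) ∧ HatBP m 0 0 L0 ∧
      ∀ i, 1 ≤ i → i ≤ 2 * m + 1 →
        L i = (∑ j, F j i) + (∑ j, F' j i) + L0 i :=
  hatBP_decompose_general m f f' L hL
end

section
/- Fix (e, e') ∈ ℕ × ℕ, n ∈ ℕ, and m large enough that λ_{2m−1} = λ_{2m} = 0 for all λ ∈ BP^n_{e,e'}. The map κ' sending λ to Λ = (Λ₁, ..., Λ_{2m}) with Λ_{2k−1} = λ_{2k−1} + (m−k+1)e + (m−k)e' for 1 ≤ k ≤ m and Λ_{2k} = λ_{2k} + (m−k)(e+e') for 1 ≤ k ≤ m is an injection from BP^n_{e,e'} into the set of sequences Λ₁ ≥ Λ₂ ≥ ... ≥ Λ_{2m} of naturals with Λ_i − Λ_{i+2} ≥ e + e' for 1 ≤ i ≤ 2m − 2,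 Λ_{2m−1} = e, and Λ_{2m} = 0. -/
/-- The map κ' of 2.2: Λ_{2k−1} = λ_{2k−1} + (m−k+1)e + (m−k)e',
Λ_{2k} = λ_{2k} + (m−k)(e+e'). -/
def kappaMap' (e e' m : ℕ) (l : ℕ → ℕ) : ℕ → ℕ := fun i =>
  if i % 2 = 1 then l i + ((2 * m - i + 1) / 2) * e + ((2 * m - i) / 2) * e'
  else l i + ((2 * m - i) / 2) * (e + e')

/-!
`κ'(λ) = λ + κ'(∅)`, and the staircase `κ'(∅)` drops by exactly `e` after each odd position
and by `e'` after each even one, down to `κ'(∅)_{2m-1} = e`, `κ'(∅)_{2m} = 0`. The excess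
conditions `λ_{i+1} ≤ λ_i + e` resp. `+ e'` are therefore exactly what makes `κ'(λ)` weakly
decreasing, and `λ_{i+2} ≤ λ_i` gives the gaps `e + e'`. Since `λ_{2m-1} = λ_{2m} = 0`, the
bipartition vanishes beyond `2m`, so it is recovered from `Λ₁, …, Λ_{2m}` by subtracting `κ'(∅)`.
-/

section KappaMap

variable {e e' m : ℕ}

theorem kappaMap'_apply (l : ℕ → ℕ) (i : ℕ) :
    kappaMap' e e' m l i = l i + kappaMap' e e' m 0 i := by
  unfold kappaMap'
  split_ifs <;> simp only [Pi.zero_apply, zero_add, add_assoc]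

theorem kappaMap'_zero_of_odd {i : ℕ} (hi : Odd i) (h : i < 2 * m) :
    kappaMap' e e' m 0 i = kappaMap' e e' m 0 (i + 1) + e := by
  rw [Nat.odd_iff] at hi
  have hi' : ¬ (i + 1) % 2 = 1 := by omega
  have h₁ : (2 * m - i + 1) / 2 = (2 * m - (i + 1)) / 2 + 1 := by omega
  have h₂ : (2 * m - i) / 2 = (2 * m - (i + 1)) / 2 := by omega
  simp only [kappaMap', Pi.zero_apply, if_pos hi, if_neg hi', h₁, h₂]
  ring

theorem kappaMap'_zero_of_even {i : ℕ} (hi : Even i) (h : i < 2 * m) :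
    kappaMap' e e' m 0 i = kappaMap' e e' m 0 (i + 1) + e' := by
  rw [Nat.even_iff] at hi
  have hi' : ¬ i % 2 = 1 := by omega
  have hi₁ : (i + 1) % 2 = 1 := by omega
  have h₁ : (2 * m - i) / 2 = (2 * m - (i + 1) + 1) / 2 := by omega
  have h₂ : (2 * m - i) / 2 = (2 * m - (i + 1)) / 2 + 1 := by omega
  simp only [kappaMap', Pi.zero_apply, if_pos hi₁, if_neg hi']
  rw [← h₁, h₂]
  ring

theorem kappaMap'_zero_add_two {i : ℕ} (h : i + 2 ≤ 2 * m) :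
    kappaMap' e e' m 0 i = kappaMap' e e' m 0 (i + 2) + (e + e') := by
  rcases Nat.even_or_odd i with hi | hi
  · rw [kappaMap'_zero_of_even hi (by omega), kappaMap'_zero_of_odd hi.add_one (by omega)]
    ring
  · rw [kappaMap'_zero_of_odd hi (by omega), kappaMap'_zero_of_even hi.add_one (by omega)]
    ring

theorem kappaMap'_zero_two_mul : kappaMap' e e' m 0 (2 * m) = 0 := by
  simp [kappaMap']

theorem kappaMap'_zero_two_mul_sub_one (hm : 1 ≤ m) : kappaMap' e e' m 0 (2 * m - 1) = e := by
  rw [kappaMap'_zero_of_odd (by rw [Nat.odd_iff]; omega) (by omega),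
    Nat.sub_add_cancel (by omega), kappaMap'_zero_two_mul, zero_add]

theorem kappaMap'_succ_le {l : ℕ → ℕ} (hl : HasExcess l e e') {i : ℕ} (hi : 1 ≤ i)
    (h : i < 2 * m) : kappaMap' e e' m l (i + 1) ≤ kappaMap' e e' m l i := by
  rw [kappaMap'_apply l i, kappaMap'_apply l (i + 1)]
  rcases Nat.even_or_odd i with hev | hodd
  · have := (hl i hi).2 hev
    rw [kappaMap'_zero_of_even hev h]
    omega
  · have := (hl i hi).1 hodd
    rw [kappaMap'_zero_of_odd hodd h]
    omega

theorem kappaMap'_add_two_add_le {l : ℕ → ℕ} {i : ℕ} (hl : l (i + 2) ≤ l i)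
    (h : i + 2 ≤ 2 * m) : kappaMap' e e' m l (i + 2) + (e + e') ≤ kappaMap' e e' m l i := by
  rw [kappaMap'_apply l i, kappaMap'_apply l (i + 2), kappaMap'_zero_add_two h]
  omega

theorem eq_of_kappaMap'_eq {l l' : ℕ → ℕ} (h₀ : l 0 = l' 0)
    (hl : ∀ i, 2 * m < i → l i = 0) (hl' : ∀ i, 2 * m < i → l' i = 0)
    (hΛ : ∀ i, 1 ≤ i → i ≤ 2 * m → kappaMap' e e' m l i = kappaMap' e e' m l' i) :
    l = l' := by
  funext i
  rcases Nat.eq_zero_or_pos i with rfl | hpos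
  · exact h₀
  rcases lt_or_ge (2 * m) i with hgt | hle
  · rw [hl i hgt, hl' i hgt]
  · have := hΛ i hpos hle
    rw [kappaMap'_apply l, kappaMap'_apply l'] at this
    exact Nat.add_right_cancel this

end KappaMap

theorem eq_zero_of_le_of_eq_zero_of_eq_zero {l : ℕ → ℕ}
    (hmono : ∀ i, 1 ≤ i → l (i + 2) ≤ l i) {a : ℕ} (ha : 1 ≤ a) (h₀ : l a = 0)
    (h₁ : l (a + 1) = 0) {j : ℕ} (hj : a ≤ j) : l j = 0 := by
  have key : ∀ k, l (a + k) = 0 ∧ l (a + k + 1) = 0 := by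
    intro k
    induction k with
    | zero => exact ⟨h₀, h₁⟩
    | succ k ih =>
      have := hmono (a + k) (by omega)
      exact ⟨ih.2, show l (a + k + 2) = 0 by omega⟩
  obtain ⟨k, rfl⟩ := Nat.exists_eq_add_of_le hj
  exact (key k).1

theorem kappa'_injection (e e' n m : ℕ) (hm : 1 ≤ m)
    (hlarge : ∀ l : ℕ → ℕ, IsBipartition l → HasExcess l e e' → BSize l n →
      l (2 * m - 1) = 0 ∧ l (2 * m) = 0) :
    (∀ l : ℕ → ℕ, IsBipartition l → HasExcess l e e' → BSize l n →
      (∀ i, 1 ≤ i → i ≤ 2 * m - 1 →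
        kappaMap' e e' m l (i + 1) ≤ kappaMap' e e' m l i) ∧
      (∀ i, 1 ≤ i → i ≤ 2 * m - 2 →
        kappaMap' e e' m l (i + 2) + (e + e') ≤ kappaMap' e e' m l i) ∧
      kappaMap' e e' m l (2 * m - 1) = e ∧ kappaMap' e e' m l (2 * m) = 0) ∧
    (∀ l l' : ℕ → ℕ,
      IsBipartition l → HasExcess l e e' → BSize l n →
      IsBipartition l' → HasExcess l' e e' → BSize l' n →
      (∀ i, 1 ≤ i → i ≤ 2 * m → kappaMap' e e' m l i = kappaMap' e e' m l' i) →
      l = l') := by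
  have vanish : ∀ l, IsBipartition l → HasExcess l e e' → BSize l n →
      ∀ i, 2 * m < i → l i = 0 := by
    intro l hbp hex hsz i hi
    obtain ⟨h₁, h₂⟩ := hlarge l hbp hex hsz
    rw [← Nat.sub_add_cancel (show 1 ≤ 2 * m by omega)] at h₂
    exact eq_zero_of_le_of_eq_zero_of_eq_zero hbp.2.1 (by omega) h₁ h₂ (by omega)
  refine ⟨fun l hbp hex hsz => ?_, fun l l' hbp hex hsz hbp' hex' hsz' hΛ => ?_⟩
  · obtain ⟨h₁, h₂⟩ := hlarge l hbp hex hsz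
    refine ⟨fun i hi hi' => kappaMap'_succ_le hex hi (by omega),
      fun i hi hi' => kappaMap'_add_two_add_le (hbp.2.1 i hi) (by omega), ?_, ?_⟩
    · rw [kappaMap'_apply, h₁, kappaMap'_zero_two_mul_sub_one hm, zero_add]
    · rw [kappaMap'_apply, h₂, kappaMap'_zero_two_mul, zero_add]
  · exact eq_of_kappaMap'_eq (hbp.1.trans hbp'.1.symm) (vanish l hbp hex hsz)
      (vanish l' hbp' hex' hsz') hΛ
end
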